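/- arXiv:2411.14226 — 2 statements merged into one kernel-verified Lean document; each statement's English description precedes it below -/
import Mathlib

section
/- Let ν : ℝ_{≥0} → ℝ_{≥0} be such that ζ ↦ ν(ζ)ζ is strongly monotone with constant m > 0. Then for all vectors b, c ∈ ℝ³: (ν(‖b‖)b − ν(‖c‖)c)·(b − c) ≥ m‖b − c‖². -/
open RealInnerProductSpace

section RadialField

variable {ν : ℝ → ℝ} {m : ℝ}

/-- Testing strong monotonicity of `ζ ↦ ν ζ * ζ` against `η = 0` gives `ν ζ * ζ ^ 2 ≥ m * ζ ^ 2`. -/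
lemma le_of_strongly_monotone_mul_self
    (hmono : ∀ ζ η : ℝ, 0 ≤ ζ → 0 ≤ η → (ν ζ * ζ - ν η * η) * (ζ - η) ≥ m * (ζ - η) ^ 2)
    {ζ : ℝ} (hζ : 0 < ζ) : m ≤ ν ζ := by
  have h := hmono ζ 0 hζ.le le_rfl
  simp only [mul_zero, sub_zero] at h
  exact le_of_mul_le_mul_right (by linarith) (pow_pos hζ 2)

variable {E : Type*} [NormedAddCommGroup E] [InnerProductSpace ℝ E]

lemma inner_smul_sub_smul_sub_eq (b c : E) (x y : ℝ) :
    ⟪x • b - y • c, b - c⟫ = x * ‖b‖ ^ 2 - (x + y) * ⟪b, c⟫ + y * ‖c‖ ^ 2 := by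
  rw [inner_sub_left, inner_sub_right, inner_sub_right, real_inner_smul_left,
    real_inner_smul_left, real_inner_smul_left, real_inner_smul_left,
    real_inner_self_eq_norm_sq, real_inner_self_eq_norm_sq, real_inner_comm b c]
  ring

lemma mul_norm_mul_norm_sub_inner_nonneg
    (hmono : ∀ ζ η : ℝ, 0 ≤ ζ → 0 ≤ η → (ν ζ * ζ - ν η * η) * (ζ - η) ≥ m * (ζ - η) ^ 2)
    (b c : E) : 0 ≤ (ν ‖b‖ + ν ‖c‖ - 2 * m) * (‖b‖ * ‖c‖ - ⟪b, c⟫) := by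
  rcases eq_or_ne b 0 with rfl | hb
  · simp
  rcases eq_or_ne c 0 with rfl | hc
  · simp
  have hνb := le_of_strongly_monotone_mul_self hmono (norm_pos_iff.mpr hb)
  have hνc := le_of_strongly_monotone_mul_self hmono (norm_pos_iff.mpr hc)
  exact mul_nonneg (by linarith) (sub_nonneg.mpr (real_inner_le_norm b c))

/-- The excess `⟪ν‖b‖ b − ν‖c‖ c, b − c⟫ − m‖b − c‖²` splits as the scalar excess at
`(‖b‖, ‖c‖)` plus `(ν‖b‖ + ν‖c‖ − 2m)(‖b‖‖c‖ − ⟪b, c⟫)`, and both are nonnegative. -/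
theorem inner_radial_sub_ge
    (hmono : ∀ ζ η : ℝ, 0 ≤ ζ → 0 ≤ η → (ν ζ * ζ - ν η * η) * (ζ - η) ≥ m * (ζ - η) ^ 2)
    (b c : E) : ⟪ν ‖b‖ • b - ν ‖c‖ • c, b - c⟫ ≥ m * ‖b - c‖ ^ 2 := by
  have hscalar := hmono ‖b‖ ‖c‖ (norm_nonneg b) (norm_nonneg c)
  have hcross := mul_norm_mul_norm_sub_inner_nonneg hmono b c
  rw [inner_smul_sub_smul_sub_eq, norm_sub_sq_real]
  linear_combination hscalar + hcross

end RadialField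

theorem stmt9_general (ν : ℝ → ℝ) (m : ℝ)
    (hmono : ∀ ζ η : ℝ, 0 ≤ ζ → 0 ≤ η →
      (ν ζ * ζ - ν η * η) * (ζ - η) ≥ m * (ζ - η) ^ 2) :
    ∀ b c : EuclideanSpace ℝ (Fin 3),
      ⟪ν ‖b‖ • b - ν ‖c‖ • c, b - c⟫ ≥ m * ‖b - c‖ ^ 2 :=
  inner_radial_sub_ge hmono

/-- If `ζ ↦ ν(ζ)ζ` is strongly monotone with constant `m > 0` and `ν ≥ 0`, then
the radial vector field `b ↦ ν(‖b‖)b` on `ℝ³` is strongly monotone with the same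
constant: `(ν(‖b‖)b − ν(‖c‖)c)·(b − c) ≥ m‖b − c‖²`. -/
theorem stmt9 (ν : ℝ → ℝ) (m : ℝ) (hm : 0 < m)
    (hνnn : ∀ ζ : ℝ, 0 ≤ ζ → 0 ≤ ν ζ)
    (hmono : ∀ ζ η : ℝ, 0 ≤ ζ → 0 ≤ η →
      (ν ζ * ζ - ν η * η) * (ζ - η) ≥ m * (ζ - η) ^ 2) :
    ∀ b c : EuclideanSpace ℝ (Fin 3),
      ⟪ν ‖b‖ • b - ν ‖c‖ • c, b - c⟫ ≥ m * ‖b - c‖ ^ 2 :=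
  stmt9_general ν m hmono
end

section
/- Suppose the reduced passive system satisfies ∫₀ᵗ u(τ)ᵀ y_POD(τ) dτ ≥ 0 for all t and all admissible inputs u, and let y_δ(t) = y_POD(t) − Cε(t) + δ(t)u(t), where ‖ε(t)‖ ≤ θ(t) and δ(t) ≥ ‖C‖θ(t)/‖u(t)‖ whenever u(t) ≠ 0 and δ(t) ≥ 0 otherwise. Then ∫₀ᵗ u(τ)ᵀ y_δ(τ) dτ ≥ 0 for all t ∈ [0,T], i.e., the perturbed system is io-passive. -/
open RealInnerProductSpace MeasureTheory

/-! The perturbation changes the supply rate `⟪u, y⟫` by `δ ‖u‖² - ⟪u, Cε⟫`, which is pointwise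
nonnegative by Cauchy–Schwarz and the choice of `δ`; integrating it adds a nonnegative term to
the passive supply `∫ ⟪u, y_POD⟫`. -/

theorem real_inner_le_mul_real_inner_self {E : Type*} [NormedAddCommGroup E]
    [InnerProductSpace ℝ E] {u w : E} {r δ : ℝ} (hw : ‖w‖ ≤ r)
    (hδ : u ≠ 0 → r / ‖u‖ ≤ δ) : ⟪u, w⟫ ≤ δ * ⟪u, u⟫ := by
  rcases eq_or_ne u 0 with rfl | hu
  · simp
  have hu_pos : 0 < ‖u‖ := norm_pos_iff.mpr hu
  have hr : r ≤ δ * ‖u‖ := (div_le_iff₀ hu_pos).mp (hδ hu)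
  calc ⟪u, w⟫ ≤ ‖u‖ * ‖w‖ := real_inner_le_norm u w
    _ ≤ ‖u‖ * (δ * ‖u‖) := mul_le_mul_of_nonneg_left (hw.trans hr) hu_pos.le
    _ = δ * ⟪u, u⟫ := by rw [real_inner_self_eq_norm_mul_norm]; ring

theorem intervalIntegral_sub_add_nonneg {f g h : ℝ → ℝ} {a b : ℝ} (hab : a ≤ b)
    (hf : IntervalIntegrable f volume a b) (hg : IntervalIntegrable g volume a b)
    (hh : IntervalIntegrable h volume a b) (hf_nonneg : 0 ≤ ∫ x in a..b, f x)
    (hgh : ∀ x ∈ Set.Icc a b, g x ≤ h x) :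
    0 ≤ ∫ x in a..b, (f x - g x + h x) := by
  rw [intervalIntegral.integral_add (hf.sub hg) hh, intervalIntegral.integral_sub hf hg]
  have := intervalIntegral.integral_mono_on hab hg hh hgh
  linarith

theorem stmt13_general (n m : ℕ) (T : ℝ)
    (u yPOD yδ : ℝ → EuclideanSpace ℝ (Fin m))
    (ε : ℝ → EuclideanSpace ℝ (Fin n))
    (C : EuclideanSpace ℝ (Fin n) →L[ℝ] EuclideanSpace ℝ (Fin m))
    (θ δ : ℝ → ℝ)
    (hpass : ∀ t ∈ Set.Icc (0 : ℝ) T, 0 ≤ ∫ τ in (0:ℝ)..t, ⟪u τ, yPOD τ⟫)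
    (hyδ : ∀ t ∈ Set.Icc (0 : ℝ) T, yδ t = yPOD t - C (ε t) + δ t • u t)
    (hθ : ∀ t ∈ Set.Icc (0 : ℝ) T, ‖ε t‖ ≤ θ t)
    (hδ : ∀ t ∈ Set.Icc (0 : ℝ) T,
      (u t ≠ 0 → ‖C‖ * θ t / ‖u t‖ ≤ δ t) ∧ 0 ≤ δ t)
    (hint1 : ∀ t ∈ Set.Icc (0 : ℝ) T,
      IntervalIntegrable (fun τ => ⟪u τ, yPOD τ⟫) volume 0 t)
    (hint2 : ∀ t ∈ Set.Icc (0 : ℝ) T,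
      IntervalIntegrable (fun τ => ⟪u τ, C (ε τ)⟫) volume 0 t)
    (hint3 : ∀ t ∈ Set.Icc (0 : ℝ) T,
      IntervalIntegrable (fun τ => δ τ * ⟪u τ, u τ⟫) volume 0 t) :
    ∀ t ∈ Set.Icc (0 : ℝ) T, 0 ≤ ∫ τ in (0:ℝ)..t, ⟪u τ, yδ τ⟫ := by
  intro t ht
  have hsub : Set.Icc 0 t ⊆ Set.Icc 0 T := Set.Icc_subset_Icc le_rfl ht.2
  have hsplit : ∫ τ in (0:ℝ)..t, ⟪u τ, yδ τ⟫ =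
      ∫ τ in (0:ℝ)..t, (⟪u τ, yPOD τ⟫ - ⟪u τ, C (ε τ)⟫ + δ τ * ⟪u τ, u τ⟫) := by
    refine intervalIntegral.integral_congr fun τ hτ => ?_
    rw [Set.uIcc_of_le ht.1] at hτ
    simp only [hyδ τ (hsub hτ), inner_add_right, inner_sub_right, real_inner_smul_right]
  rw [hsplit]
  refine intervalIntegral_sub_add_nonneg ht.1 (hint1 t ht) (hint2 t ht) (hint3 t ht)
    (hpass t ht) fun τ hτ => ?_
  have hCε : ‖C (ε τ)‖ ≤ ‖C‖ * θ τ :=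
    C.le_of_opNorm_le_of_le le_rfl (hθ τ (hsub hτ))
  exact real_inner_le_mul_real_inner_self hCε (hδ τ (hsub hτ)).1

/-- Passivity enforcement: if the POD-reduced system is io-passive and the
perturbed output is `y_δ(t) = y_POD(t) − Cε(t) + δ(t)u(t)` with `‖ε(t)‖ ≤ θ(t)`
and `δ(t) ≥ ‖C‖θ(t)/‖u(t)‖` whenever `u(t) ≠ 0` (and `δ(t) ≥ 0`), then the
perturbed system is io-passive: `∫₀ᵗ u(τ)ᵀ y_δ(τ) dτ ≥ 0`. -/
theorem stmt13 (n m : ℕ) (T : ℝ) (hT : 0 ≤ T)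
    (u yPOD yδ : ℝ → EuclideanSpace ℝ (Fin m))
    (ε : ℝ → EuclideanSpace ℝ (Fin n))
    (C : EuclideanSpace ℝ (Fin n) →L[ℝ] EuclideanSpace ℝ (Fin m))
    (θ δ : ℝ → ℝ)
    (hθnn : ∀ t ∈ Set.Icc (0 : ℝ) T, 0 ≤ θ t)
    (hpass : ∀ t ∈ Set.Icc (0 : ℝ) T, 0 ≤ ∫ τ in (0:ℝ)..t, ⟪u τ, yPOD τ⟫)
    (hyδ : ∀ t ∈ Set.Icc (0 : ℝ) T, yδ t = yPOD t - C (ε t) + δ t • u t)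
    (hθ : ∀ t ∈ Set.Icc (0 : ℝ) T, ‖ε t‖ ≤ θ t)
    (hδ : ∀ t ∈ Set.Icc (0 : ℝ) T,
      (u t ≠ 0 → ‖C‖ * θ t / ‖u t‖ ≤ δ t) ∧ 0 ≤ δ t)
    (hint1 : ∀ t ∈ Set.Icc (0 : ℝ) T,
      IntervalIntegrable (fun τ => ⟪u τ, yPOD τ⟫) volume 0 t)
    (hint2 : ∀ t ∈ Set.Icc (0 : ℝ) T,
      IntervalIntegrable (fun τ => ⟪u τ, C (ε τ)⟫) volume 0 t)
    (hint3 : ∀ t ∈ Set.Icc (0 : ℝ) T,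
      IntervalIntegrable (fun τ => δ τ * ⟪u τ, u τ⟫) volume 0 t) :
    ∀ t ∈ Set.Icc (0 : ℝ) T, 0 ≤ ∫ τ in (0:ℝ)..t, ⟪u τ, yδ τ⟫ :=
  stmt13_general n m T u yPOD yδ ε C θ δ hpass hyδ hθ hδ hint1 hint2 hint3
end
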